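/- arXiv:2005.03328 — 14 statements merged into one kernel-verified Lean document; each statement's English description precedes it below -/
import Mathlib

section
/- Absorption rule (Lemma 3.1): Let A : Finset α, B : Finset β, and let p : α → β → Prop be a decidable join predicate that is a key (PKFK) join into B, i.e., for every a ∈ A there is at most one b ∈ B with p a b. Then the image of the join (A ×ˢ B).filter (fun x => p x.1 x.2) under the first projection equals the semi-join A.filter (fun a => ∃ b ∈ B, p a b), and the join and the semi-join have equal cardinality: ((A ×ˢ B).filter (fun x => p x.1 x.2)).card = (A.filter (fun a => ∃ b ∈ B, p a b)).card. -/
/-- **Absorption rule (Lemma 3.1).**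
If `p` is a key (PKFK) join of `A` into `B` (every `a ∈ A` has at most one match `b ∈ B`),
then the first projection of the join `(A ×ˢ B).filter (fun x => p x.1 x.2)` equals the
semi-join `A.filter (fun a => ∃ b ∈ B, p a b)`, and the join and the semi-join have equal
cardinality. -/
theorem absorption_rule {α β : Type*} [DecidableEq α]
    (A : Finset α) (B : Finset β) (p : α → β → Prop) [∀ a b, Decidable (p a b)]
    (hkey : ∀ a ∈ A, ∀ b₁ ∈ B, ∀ b₂ ∈ B, p a b₁ → p a b₂ → b₁ = b₂) :
    ((A ×ˢ B).filter fun x => p x.1 x.2).image Prod.fst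
        = A.filter (fun a => ∃ b ∈ B, p a b) ∧
      ((A ×ˢ B).filter fun x => p x.1 x.2).card
        = (A.filter fun a => ∃ b ∈ B, p a b).card := by
  have himg : ((A ×ˢ B).filter fun x => p x.1 x.2).image Prod.fst
      = A.filter (fun a => ∃ b ∈ B, p a b) := by
    ext a
    simp only [Finset.mem_image, Finset.mem_filter, Finset.mem_product]
    constructor
    · rintro ⟨⟨a', b⟩, ⟨⟨ha, hb⟩, hp⟩, rfl⟩
      exact ⟨ha, b, hb, hp⟩
    · rintro ⟨ha, b, hb, hp⟩
      exact ⟨(a, b), ⟨⟨ha, hb⟩, hp⟩, rfl⟩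
  refine ⟨himg, ?_⟩
  rw [← himg]
  rw [Finset.card_image_of_injOn]
  rintro ⟨a₁, b₁⟩ h1 ⟨a₂, b₂⟩ h2 (h : a₁ = a₂)
  simp only [Finset.coe_filter, Set.mem_setOf_eq, Finset.mem_product] at h1 h2
  subst h
  obtain ⟨⟨ha, hb1⟩, hp1⟩ := h1
  obtain ⟨⟨_, hb2⟩, hp2⟩ := h2
  exact Prod.ext rfl (hkey a₁ ha b₁ hb1 b₂ hb2 hp1 hp2)
end

section
/- Star query absorption rule (Lemma 4.2): For a star query with PKFK joins, the filtered fact table is the first projection of the full star join, R₀' = J.image Prod.fst, and their cardinalities are equal: R₀'.card = J.card. -/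
open Finset

/-- The full star join `J` of the fact table `R₀` with the dimension tables `R i`:
the pairs `(a, f)` with `a ∈ R₀`, `f i ∈ R i` for every `i`, and `p i a (f i)` for every `i`. -/
def starJoin {α : Type*} {n : ℕ} {β : Fin n → Type*}
    (R₀ : Finset α) (R : ∀ i, Finset (β i))
    (p : ∀ i, α → β i → Prop) [∀ i a b, Decidable (p i a b)] :
    Finset (α × (∀ i, β i)) :=
  (R₀ ×ˢ Fintype.piFinset R).filter fun x => ∀ i, p i x.1 (x.2 i)

/-- The fact table after the bitvector filters (semi-joins) from all dimension tables
are pushed down to it. -/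
def factFiltered {α : Type*} {n : ℕ} {β : Fin n → Type*}
    (R₀ : Finset α) (R : ∀ i, Finset (β i))
    (p : ∀ i, α → β i → Prop) [∀ i a b, Decidable (p i a b)] : Finset α :=
  R₀.filter fun a => ∀ i, ∃ b ∈ R i, p i a b

/-- **Star query absorption rule (Lemma 4.2).**
For a star query with PKFK joins (every `a` has at most one match in each dimension table),
the filtered fact table is the first projection of the full star join, and their
cardinalities are equal. -/
theorem star_absorption {α : Type*} [DecidableEq α] {n : ℕ} (hn : 1 ≤ n)
    {β : Fin n → Type*}
    (R₀ : Finset α) (R : ∀ i, Finset (β i))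
    (p : ∀ i, α → β i → Prop) [∀ i a b, Decidable (p i a b)]
    (hkey : ∀ (i : Fin n) (a : α), ∀ b₁ ∈ R i, ∀ b₂ ∈ R i,
      p i a b₁ → p i a b₂ → b₁ = b₂) :
    factFiltered R₀ R p = (starJoin R₀ R p).image Prod.fst ∧
      (factFiltered R₀ R p).card = (starJoin R₀ R p).card := by
  have himg : factFiltered R₀ R p = (starJoin R₀ R p).image Prod.fst := by
    ext a
    simp only [factFiltered, starJoin, Finset.mem_filter, Finset.mem_image,
      Finset.mem_product, Fintype.mem_piFinset, Prod.exists]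
    constructor
    · rintro ⟨ha, hex⟩
      choose f hf hp using hex
      exact ⟨a, f, ⟨⟨ha, hf⟩, hp⟩, rfl⟩
    · rintro ⟨a', f, ⟨⟨ha, hf⟩, hp⟩, rfl⟩
      exact ⟨ha, fun i => ⟨f i, hf i, hp i⟩⟩
  refine ⟨himg, ?_⟩
  rw [himg]
  apply Finset.card_image_of_injOn
  rintro ⟨a₁, f₁⟩ h₁ ⟨a₂, f₂⟩ h₂ (h : a₁ = a₂)
  subst h
  simp only [starJoin, Finset.mem_filter, Finset.mem_product, Fintype.mem_piFinset, Finset.mem_coe] at h₁ h₂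
  have : f₁ = f₂ := funext fun i =>
    hkey i a₁ (f₁ i) (h₁.1.2 i) (f₂ i) (h₂.1.2 i) (h₁.2 i) (h₂.2 i)
  rw [this]
end

section
/- Partial star join invariance (core of the proof of Lemma 4.3): For a star query with PKFK joins and every finite set s : Finset (Fin n) of dimension indices, the partial join J(s) of the filtered fact table R₀' with the dimension tables indexed by s satisfies (J(s)).card = R₀'.card. Consequently every intermediate join result in a right deep tree whose rightmost leaf is the filtered fact table has the same cardinality as R₀'. -/
open Finset

/-- The partial join `J(s)` of the filtered fact table with the dimension tables indexed
by `s`: the pairs `(a, f)` with `a ∈ R₀'`, `f ∈ s.pi R`, and `p i a (f i hi)` for every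
`i ∈ s`. -/
def starPartialJoin {α : Type*} {n : ℕ} {β : Fin n → Type*}
    (R₀ : Finset α) (R : ∀ i, Finset (β i))
    (p : ∀ i, α → β i → Prop) [∀ i a b, Decidable (p i a b)]
    (s : Finset (Fin n)) : Finset (α × (∀ i ∈ s, β i)) :=
  ((factFiltered R₀ R p) ×ˢ s.pi R).filter
    fun x => ∀ i (hi : i ∈ s), p i x.1 (x.2 i hi)

/-- **Partial star join invariance (core of the proof of Lemma 4.3).**
For a star query with PKFK joins, every partial join of the filtered fact table with any
set `s` of dimension tables has the same cardinality as the filtered fact table itself;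
hence every intermediate join result in a right deep tree whose rightmost leaf is the
filtered fact table has the same cardinality as `R₀'`. -/
theorem star_partial_join_invariance {α : Type*} {n : ℕ} (hn : 1 ≤ n)
    {β : Fin n → Type*}
    (R₀ : Finset α) (R : ∀ i, Finset (β i))
    (p : ∀ i, α → β i → Prop) [∀ i a b, Decidable (p i a b)]
    (hkey : ∀ (i : Fin n) (a : α), ∀ b₁ ∈ R i, ∀ b₂ ∈ R i,
      p i a b₁ → p i a b₂ → b₁ = b₂) :
    ∀ s : Finset (Fin n),
      (starPartialJoin R₀ R p s).card = (factFiltered R₀ R p).card := by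
  intro s
  apply Finset.card_bij (fun x _ => x.1)
  · intro x hx
    simp only [starPartialJoin, Finset.mem_filter, Finset.mem_product] at hx
    exact hx.1.1
  · intro x hx y hy hxy
    simp only [starPartialJoin, Finset.mem_filter, Finset.mem_product,
      Finset.mem_pi] at hx hy
    obtain ⟨⟨_, hxp⟩, hxj⟩ := hx
    obtain ⟨⟨_, hyp⟩, hyj⟩ := hy
    refine Prod.ext hxy (funext fun i => funext fun hi => ?_)
    exact hkey i x.1 _ (hxp i hi) _ (hyp i hi) (hxj i hi) (hxy ▸ hyj i hi)
  · intro a ha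
    have ha' := ha
    simp only [factFiltered, Finset.mem_filter] at ha'
    refine ⟨(a, fun i _ => (ha'.2 i).choose), ?_, rfl⟩
    simp only [starPartialJoin, Finset.mem_filter, Finset.mem_product, Finset.mem_pi]
    exact ⟨⟨ha, fun i _ => (ha'.2 i).choose_spec.1⟩,
      fun i _ => (ha'.2 i).choose_spec.2⟩
end

section
/- Right deep trees for star query (Lemma 4.1): Let n ≥ 1 and consider the star join graph on vertices {0, 1, …, n}. A bijective listing X₀, X₁, …, Xₙ of the vertices is a right-deep-tree order without cross products if and only if X₀ = 0 or X₁ = 0 (the fact table is the rightmost or second-rightmost leaf). -/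
/-- Adjacency in the star join graph on vertices `{0, 1, …, n}`: vertex `0` (the fact
table) is adjacent to every other vertex, and there are no other edges. -/
def starAdj {n : ℕ} (a b : Fin (n + 1)) : Prop :=
  (a = 0 ∧ b ≠ 0) ∨ (b = 0 ∧ a ≠ 0)

/-- **Right deep trees for star query (Lemma 4.1).**
A bijective listing `X 0, X 1, …, X n` of the vertices of the star join graph is a
right-deep-tree order without cross products (every element after the first is adjacent
to some earlier element) if and only if `X 0 = 0` or `X 1 = 0`. -/
theorem star_right_deep_tree_iff {n : ℕ} (hn : 1 ≤ n)
    (X : Fin (n + 1) → Fin (n + 1)) (hX : Function.Bijective X) :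
    (∀ k : Fin (n + 1), 0 < (k : ℕ) → ∃ j, j < k ∧ starAdj (X k) (X j)) ↔
      (X 0 = 0 ∨ X 1 = 0) := by
  have hv1 : ((1 : Fin (n + 1)) : ℕ) = 1 := by
    simp [Fin.val_one']; omega
  constructor
  · intro h
    by_contra hc
    push_neg at hc
    obtain ⟨h0, h1⟩ := hc
    obtain ⟨j, hj, hadj⟩ := h 1 (by omega)
    have hj0 : j = 0 := by
      have := hj
      rw [Fin.lt_def, hv1] at this
      apply Fin.ext
      simp only [Fin.val_zero]
      omega
    subst hj0
    rcases hadj with ⟨ha, _⟩ | ⟨ha, _⟩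
    · exact h1 ha
    · exact h0 ha
  · intro h k hk
    rcases h with h0 | h1
    · have hkne : X k ≠ 0 := fun hc => by
        have : k = 0 := hX.injective (hc.trans h0.symm)
        simp [this] at hk
      exact ⟨0, by rw [Fin.lt_def]; simpa using hk, Or.inr ⟨h0, hkne⟩⟩
    · by_cases hk0 : X k = 0
      · have h0ne : X 0 ≠ 0 := fun hc => by
          have : (0 : Fin (n + 1)) = 1 := hX.injective (hc.trans h1.symm)
          have := congrArg Fin.val this
          simp [hv1] at this
          omega
        exact ⟨0, by rw [Fin.lt_def]; simpa using hk, Or.inl ⟨hk0, h0ne⟩⟩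
      · have hk1 : k ≠ 1 := fun hc => hk0 (hc ▸ h1)
        have : 1 < (k : ℕ) := by
          rcases Nat.lt_or_ge 1 (k : ℕ) with h | h
          · exact h
          · exfalso; exact hk1 (Fin.ext (by omega))
        exact ⟨1, by rw [Fin.lt_def, hv1]; omega, Or.inr ⟨h1, hk0⟩⟩
end

section
/- Minimal cost right deep tree for star query with rightmost leaf R₀ (Lemma 4.3): For a star query with PKFK joins, the cost C(σ) of the right deep tree T(R₀, R_{σ(0)}, …, R_{σ(n−1)}) is the same for every permutation σ of Fin n; that is, C(σ) = C(τ) for any two permutations σ, τ of Fin n. -/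
open Finset

/-- The set `{σ 0, σ 1, …, σ (k-1)}` of the first `k` dimension indices in the
enumeration `σ`. -/
def starPrefix {n : ℕ} (σ : Equiv.Perm (Fin n)) (k : ℕ) : Finset (Fin n) :=
  (Finset.univ.filter fun t : Fin n => (t : ℕ) < k).image σ

/-- The cost `C_out` of the right deep tree `T(R₀, R (σ 0), …, R (σ (n-1)))` with all
bitvector filters pushed down to the fact table:
`(Σ i, |R i|) + |R₀'| + Σ_{k=1}^{n} |J({σ 0, …, σ (k-1)})|`. -/
def starCost {α : Type*} {n : ℕ} {β : Fin n → Type*}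
    (R₀ : Finset α) (R : ∀ i, Finset (β i))
    (p : ∀ i, α → β i → Prop) [∀ i a b, Decidable (p i a b)]
    (σ : Equiv.Perm (Fin n)) : ℕ :=
  (∑ i, (R i).card) + (factFiltered R₀ R p).card
    + ∑ k ∈ Finset.range n, (starPartialJoin R₀ R p (starPrefix σ (k + 1))).card

/-- Under key joins, every partial join has the same cardinality as the filtered
fact table. -/
lemma card_starPartialJoin {α : Type*} {n : ℕ} {β : Fin n → Type*}
    (R₀ : Finset α) (R : ∀ i, Finset (β i))
    (p : ∀ i, α → β i → Prop) [∀ i a b, Decidable (p i a b)]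
    (hkey : ∀ (i : Fin n) (a : α), ∀ b₁ ∈ R i, ∀ b₂ ∈ R i,
      p i a b₁ → p i a b₂ → b₁ = b₂)
    (s : Finset (Fin n)) :
    (starPartialJoin R₀ R p s).card = (factFiltered R₀ R p).card := by
  apply Finset.card_bij (fun x _ => x.1)
  · intro x hx
    exact (Finset.mem_product.mp (Finset.mem_filter.mp hx).1).1
  · intro x hx y hy h
    obtain ⟨hx1, hx2⟩ := Finset.mem_filter.mp hx
    obtain ⟨hy1, hy2⟩ := Finset.mem_filter.mp hy
    have hxp := (Finset.mem_product.mp hx1).2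
    have hyp := (Finset.mem_product.mp hy1).2
    have : x.2 = y.2 := by
      funext i hi
      exact hkey i x.1 _ (Finset.mem_pi.mp hxp i hi) _ (Finset.mem_pi.mp hyp i hi)
        (hx2 i hi) (h ▸ hy2 i hi)
    exact Prod.ext h this
  · intro a ha
    have hex := (Finset.mem_filter.mp ha).2
    refine ⟨(a, fun i _ => (hex i).choose), ?_, rfl⟩
    refine Finset.mem_filter.mpr ⟨Finset.mem_product.mpr ⟨ha, ?_⟩, ?_⟩
    · exact Finset.mem_pi.mpr fun i _ => (hex i).choose_spec.1
    · exact fun i _ => (hex i).choose_spec.2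

/-- **Minimal cost right deep tree for star query with rightmost leaf `R₀` (Lemma 4.3).**
For a star query with PKFK joins, the cost of the right deep tree
`T(R₀, R (σ 0), …, R (σ (n-1)))` is the same for every permutation `σ` of `Fin n`. -/
theorem star_cost_rightmost_fact_invariant {α : Type*} {n : ℕ} (hn : 1 ≤ n)
    {β : Fin n → Type*}
    (R₀ : Finset α) (R : ∀ i, Finset (β i))
    (p : ∀ i, α → β i → Prop) [∀ i a b, Decidable (p i a b)]
    (hkey : ∀ (i : Fin n) (a : α), ∀ b₁ ∈ R i, ∀ b₂ ∈ R i,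
      p i a b₁ → p i a b₂ → b₁ = b₂) :
    ∀ σ τ : Equiv.Perm (Fin n), starCost R₀ R p σ = starCost R₀ R p τ := by
  intro σ τ
  unfold starCost
  congr 1
  apply Finset.sum_congr rfl
  intro k _
  rw [card_starPartialJoin R₀ R p hkey, card_starPartialJoin R₀ R p hkey]
end

section
/- Minimal cost right deep tree for star query with rightmost leaf R_k (Lemma 4.4): For a star query with PKFK joins and a fixed dimension index k ∈ Fin n, the cost C_k(σ) of the right deep tree T(R_k, R₀, R_{σ(0)}, …, R_{σ(n−2)}) is the same for every permutation σ of the dimension indices other than k; that is, C_k(σ) = C_k(τ) for any two enumerations σ, τ of Fin n \ {k}. -/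
open Finset

/-- `R₀''`: the fact table after the bitvector filters (semi-joins) from every dimension
table except `R k` are pushed down to it. -/
def factFilteredExcept {α : Type*} {n : ℕ} {β : Fin n → Type*}
    (R₀ : Finset α) (R : ∀ i, Finset (β i))
    (p : ∀ i, α → β i → Prop) [∀ i a b, Decidable (p i a b)]
    (k : Fin n) : Finset α :=
  R₀.filter fun a => ∀ i, i ≠ k → ∃ b ∈ R i, p i a b

/-- `R k'`: the dimension table `R k` after the bitvector filter created from `R₀''` is
pushed down to it. -/
def dimFiltered {α : Type*} {n : ℕ} {β : Fin n → Type*}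
    (R₀ : Finset α) (R : ∀ i, Finset (β i))
    (p : ∀ i, α → β i → Prop) [∀ i a b, Decidable (p i a b)]
    (k : Fin n) : Finset (β k) :=
  (R k).filter fun b => ∃ a ∈ factFilteredExcept R₀ R p k, p k a b

/-- The partial join `J''(s)` of `R₀''` with the dimension tables indexed by `s`. -/
def starPartialJoinK {α : Type*} {n : ℕ} {β : Fin n → Type*}
    (R₀ : Finset α) (R : ∀ i, Finset (β i))
    (p : ∀ i, α → β i → Prop) [∀ i a b, Decidable (p i a b)]
    (k : Fin n) (s : Finset (Fin n)) : Finset (α × (∀ i ∈ s, β i)) :=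
  ((factFilteredExcept R₀ R p k) ×ˢ s.pi R).filter
    fun x => ∀ i (hi : i ∈ s), p i x.1 (x.2 i hi)

/-- The cost `C_k(σ)` of the right deep tree `T(R k, R₀, R (σ 1), …, R (σ (n-1)))`, where
the enumeration of `Fin n \ {k}` is encoded as a permutation `σ` with `σ 0 = k`:
`(Σ_{i ≠ k} |R i|) + |R₀''| + |R k'| + Σ_{j=0}^{n-1} |J''({k} ∪ {σ 1, …, σ j})|`. -/
def starCostK {α : Type*} {n : ℕ} {β : Fin n → Type*}
    (R₀ : Finset α) (R : ∀ i, Finset (β i))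
    (p : ∀ i, α → β i → Prop) [∀ i a b, Decidable (p i a b)]
    (k : Fin n) (σ : Equiv.Perm (Fin n)) : ℕ :=
  (∑ i ∈ Finset.univ.erase k, (R i).card) + (factFilteredExcept R₀ R p k).card
    + (dimFiltered R₀ R p k).card
    + ∑ j ∈ Finset.range n, (starPartialJoinK R₀ R p k (starPrefix σ (j + 1))).card

lemma star_join_card_const {α : Type*} {n : ℕ} {β : Fin n → Type*}
    (R₀ : Finset α) (R : ∀ i, Finset (β i))
    (p : ∀ i, α → β i → Prop) [∀ i a b, Decidable (p i a b)]
    (hkey : ∀ (i : Fin n) (a : α), ∀ b₁ ∈ R i, ∀ b₂ ∈ R i,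
      p i a b₁ → p i a b₂ → b₁ = b₂)
    (k : Fin n) (s : Finset (Fin n)) (hks : k ∈ s) :
    (starPartialJoinK R₀ R p k s).card
      = ((factFilteredExcept R₀ R p k).filter fun a => ∃ b ∈ R k, p k a b).card := by
  apply Finset.card_bij (fun x _ => x.1)
  · intro x hx
    simp only [starPartialJoinK, Finset.mem_filter, Finset.mem_product, Finset.mem_pi] at hx
    exact Finset.mem_filter.2 ⟨hx.1.1, ⟨x.2 k hks, hx.1.2 k hks, hx.2 k hks⟩⟩
  · intro x hx y hy hxy
    simp only [starPartialJoinK, Finset.mem_filter, Finset.mem_product, Finset.mem_pi] at hx hy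
    refine Prod.ext hxy ?_
    funext i hi
    exact hkey i x.1 _ (hx.1.2 i hi) _ (hy.1.2 i hi) (hx.2 i hi) (hxy.symm ▸ hy.2 i hi)
  · intro a ha
    rw [Finset.mem_filter] at ha
    have hex : ∀ i ∈ s, ∃ b, b ∈ R i ∧ p i a b := by
      intro i hi
      by_cases h : i = k
      · subst h; obtain ⟨b, hb, hpb⟩ := ha.2; exact ⟨b, hb, hpb⟩
      · obtain ⟨b, hb, hpb⟩ := (Finset.mem_filter.1 ha.1).2 i h
        exact ⟨b, hb, hpb⟩
    refine ⟨(a, fun i hi => (hex i hi).choose), ?_, rfl⟩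
    simp only [starPartialJoinK, Finset.mem_filter, Finset.mem_product, Finset.mem_pi]
    exact ⟨⟨ha.1, fun i hi => (hex i hi).choose_spec.1⟩, fun i hi => (hex i hi).choose_spec.2⟩

/-- **Minimal cost right deep tree for star query with rightmost leaf `R k` (Lemma 4.4).**
For a star query with PKFK joins and a fixed dimension index `k`, the cost of the right
deep tree `T(R k, R₀, R (σ 1), …, R (σ (n-1)))` is the same for any two enumerations of
the dimension indices other than `k` (encoded as permutations `σ, τ` with `σ 0 = τ 0 = k`). -/
theorem star_cost_rightmost_dim_invariant {α : Type*} {n : ℕ} (hn : 1 ≤ n)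
    {β : Fin n → Type*}
    (R₀ : Finset α) (R : ∀ i, Finset (β i))
    (p : ∀ i, α → β i → Prop) [∀ i a b, Decidable (p i a b)]
    (hkey : ∀ (i : Fin n) (a : α), ∀ b₁ ∈ R i, ∀ b₂ ∈ R i,
      p i a b₁ → p i a b₂ → b₁ = b₂)
    (k : Fin n) :
    ∀ σ τ : Equiv.Perm (Fin n), σ ⟨0, hn⟩ = k → τ ⟨0, hn⟩ = k →
      starCostK R₀ R p k σ = starCostK R₀ R p k τ := by
  intro σ τ hσ hτ
  have key : ∀ (ρ : Equiv.Perm (Fin n)), ρ ⟨0, hn⟩ = k → ∀ j ∈ Finset.range n,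
      (starPartialJoinK R₀ R p k (starPrefix ρ (j + 1))).card
        = ((factFilteredExcept R₀ R p k).filter fun a => ∃ b ∈ R k, p k a b).card := by
    intro ρ hρ j _
    apply star_join_card_const R₀ R p hkey
    exact Finset.mem_image.2 ⟨⟨0, hn⟩,
      Finset.mem_filter.2 ⟨Finset.mem_univ _, Nat.succ_pos j⟩, hρ⟩
  unfold starCostK
  rw [Finset.sum_congr rfl (key σ hσ), Finset.sum_congr rfl (key τ hτ)]
end

section
/- Partial join invariance with rightmost leaf R_k (core of the proof of Lemma 4.4): For a star query with PKFK joins, a fixed k ∈ Fin n, and every s : Finset (Fin n) with k ∈ s, the partial join satisfies (J''(s)).card = J.card, the cardinality of the full star join. Consequently C_k(σ) = (Σ_{i ≠ k} (R i).card) + R₀''.card + R_k'.card + n * J.card for every enumeration σ of Fin n \ {k}. -/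
open Finset

/-- **Partial join invariance with rightmost leaf `R k`
(core of the proof of Lemma 4.4).**
For a star query with PKFK joins and a fixed `k`, every partial join `J''(s)` with
`k ∈ s` has the cardinality of the full star join `J`; consequently
`C_k(σ) = (Σ_{i ≠ k} |R i|) + |R₀''| + |R k'| + n * |J|` for every enumeration `σ` of the
dimension indices other than `k` (encoded as a permutation with `σ 0 = k`). -/
theorem star_partial_join_invariance_dim_first {α : Type*} {n : ℕ} (hn : 1 ≤ n)
    {β : Fin n → Type*}
    (R₀ : Finset α) (R : ∀ i, Finset (β i))
    (p : ∀ i, α → β i → Prop) [∀ i a b, Decidable (p i a b)]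
    (hkey : ∀ (i : Fin n) (a : α), ∀ b₁ ∈ R i, ∀ b₂ ∈ R i,
      p i a b₁ → p i a b₂ → b₁ = b₂)
    (k : Fin n) :
    (∀ s : Finset (Fin n), k ∈ s →
        (starPartialJoinK R₀ R p k s).card = (starJoin R₀ R p).card) ∧
      (∀ σ : Equiv.Perm (Fin n), σ ⟨0, hn⟩ = k →
        starCostK R₀ R p k σ =
          (∑ i ∈ Finset.univ.erase k, (R i).card) + (factFilteredExcept R₀ R p k).card
            + (dimFiltered R₀ R p k).card + n * (starJoin R₀ R p).card) := by
  classical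
  set A : Finset α := R₀.filter fun a => ∀ i, ∃ b ∈ R i, p i a b with hA
  have hJ : (starJoin R₀ R p).card = A.card := by
    apply Finset.card_bij (fun x _ => x.1)
    · intro x hx
      simp only [starJoin, Finset.mem_filter, Finset.mem_product,
        Fintype.mem_piFinset] at hx
      simp only [hA, Finset.mem_filter]
      exact ⟨hx.1.1, fun i => ⟨x.2 i, hx.1.2 i, hx.2 i⟩⟩
    · intro x hx y hy hxy
      simp only [starJoin, Finset.mem_filter, Finset.mem_product,
        Fintype.mem_piFinset] at hx hy
      have h2 : x.2 = y.2 := by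
        funext i
        refine hkey i x.1 (x.2 i) (hx.1.2 i) (y.2 i) (hy.1.2 i) (hx.2 i) ?_
        rw [hxy]; exact hy.2 i
      exact Prod.ext hxy h2
    · intro a ha
      simp only [hA, Finset.mem_filter] at ha
      refine ⟨(a, fun i => (ha.2 i).choose), ?_, rfl⟩
      simp only [starJoin, Finset.mem_filter, Finset.mem_product,
        Fintype.mem_piFinset]
      exact ⟨⟨ha.1, fun i => (ha.2 i).choose_spec.1⟩,
        fun i => (ha.2 i).choose_spec.2⟩
  have hmain : ∀ s : Finset (Fin n), k ∈ s →
      (starPartialJoinK R₀ R p k s).card = (starJoin R₀ R p).card := by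
    intro s hks
    rw [hJ]
    apply Finset.card_bij (fun x _ => x.1)
    · intro x hx
      simp only [starPartialJoinK, factFilteredExcept, Finset.mem_filter,
        Finset.mem_product, Finset.mem_pi] at hx
      simp only [hA, Finset.mem_filter]
      refine ⟨hx.1.1.1, fun i => ?_⟩
      by_cases hik : i = k
      · subst hik
        exact ⟨x.2 i hks, hx.1.2 i hks, hx.2 i hks⟩
      · exact hx.1.1.2 i hik
    · intro x hx y hy hxy
      simp only [starPartialJoinK, Finset.mem_filter, Finset.mem_product,
        Finset.mem_pi] at hx hy
      have h2 : x.2 = y.2 := by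
        funext i hi
        refine hkey i x.1 (x.2 i hi) (hx.1.2 i hi) (y.2 i hi) (hy.1.2 i hi)
          (hx.2 i hi) ?_
        rw [hxy]; exact hy.2 i hi
      exact Prod.ext hxy h2
    · intro a ha
      simp only [hA, Finset.mem_filter] at ha
      refine ⟨(a, fun i _ => (ha.2 i).choose), ?_, rfl⟩
      simp only [starPartialJoinK, factFilteredExcept, Finset.mem_filter,
        Finset.mem_product, Finset.mem_pi]
      exact ⟨⟨⟨ha.1, fun i _ => ha.2 i⟩, fun i _ => (ha.2 i).choose_spec.1⟩,
        fun i _ => (ha.2 i).choose_spec.2⟩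
  refine ⟨hmain, fun σ hσ => ?_⟩
  have hsum : ∀ j ∈ Finset.range n,
      (starPartialJoinK R₀ R p k (starPrefix σ (j + 1))).card
        = (starJoin R₀ R p).card := by
    intro j _
    apply hmain
    simp only [starPrefix, Finset.mem_image, Finset.mem_filter, Finset.mem_univ]
    exact ⟨⟨0, hn⟩, ⟨trivial, Nat.succ_pos j⟩, hσ⟩
  rw [starCostK, Finset.sum_congr rfl hsum, Finset.sum_const, Finset.card_range,
    smul_eq_mul]
end

section
/- Chain absorption (core of the branch analysis): For a branch (chain) query with PKFK joins, the fully cascaded semi-join filter at the head of the chain equals the set of first components of the full chain join, A 0 = (R 0).filter (fun b₀ => ∃ f ∈ J, f 0 = b₀), and its cardinality equals the cardinality of the full chain join: (A 0).card = J.card. -/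
open Finset

/-- **Chain absorption (core of the branch analysis).**
For a branch (chain) query with PKFK joins `R 0 → R 1 → ⋯ → R n`, with full chain join
`J` and cascaded semi-join filters `A` (`A n = R n` and
`A j = (R j).filter (fun b => ∃ b' ∈ A (j+1), p b b')`), the fully cascaded filter at the
head of the chain equals the set of first components of the full chain join, and its
cardinality equals the cardinality of the full chain join. -/
theorem chain_absorption {n : ℕ} (hn : 1 ≤ n)
    {γ : Fin (n + 1) → Type*} [∀ j, DecidableEq (γ j)]
    (R : ∀ j, Finset (γ j))
    (p : ∀ j : Fin n, γ j.castSucc → γ j.succ → Prop)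
    [∀ j b b', Decidable (p j b b')]
    (hkey : ∀ (j : Fin n) (b : γ j.castSucc), ∀ b₁ ∈ R j.succ, ∀ b₂ ∈ R j.succ,
      p j b b₁ → p j b b₂ → b₁ = b₂)
    (A : ∀ j, Finset (γ j))
    (hAlast : A (Fin.last n) = R (Fin.last n))
    (hAstep : ∀ j : Fin n, A j.castSucc =
      (R j.castSucc).filter fun b => ∃ b' ∈ A j.succ, p j b b')
    (J : Finset (∀ j, γ j))
    (hJ : J = (Fintype.piFinset R).filter
      fun f => ∀ j : Fin n, p j (f j.castSucc) (f j.succ)) :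
    A 0 = (R 0).filter (fun b₀ => ∃ f ∈ J, f 0 = b₀) ∧ (A 0).card = J.card := by
  -- A ⊆ R at every level
  have hAR : ∀ k, A k ⊆ R k := by
    intro k
    rcases Fin.eq_castSucc_or_eq_last k with ⟨j, rfl⟩ | rfl
    · rw [hAstep j]; exact filter_subset _ _
    · rw [hAlast]
  -- projections of J lie in A
  have hJA : ∀ f ∈ J, ∀ k, f k ∈ A k := by
    intro f hf
    rw [hJ, mem_filter, Fintype.mem_piFinset] at hf
    intro k
    induction k using Fin.reverseInduction with
    | last => rw [hAlast]; exact hf.1 _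
    | cast j ih =>
        rw [hAstep j, mem_filter]
        exact ⟨hf.1 _, f j.succ, ih, hf.2 j⟩
  -- stepping lemma
  have hstep : ∀ (j : Fin n) (x : γ j.castSucc), x ∈ A j.castSucc →
      ∃ y, y ∈ A j.succ ∧ p j x y := by
    intro j x hx
    rw [hAstep j, mem_filter] at hx
    obtain ⟨-, y, hy, hp⟩ := hx
    exact ⟨y, hy, hp⟩
  -- every b ∈ A 0 extends to a full tuple in J
  have hext : ∀ b ∈ A 0, ∃ f ∈ J, f 0 = b := by
    intro b hb
    let F : ∀ k : Fin (n + 1), {x : γ k // x ∈ A k} :=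
      Fin.induction ⟨b, hb⟩
        (fun j prev => ⟨(hstep j prev.1 prev.2).choose,
          (hstep j prev.1 prev.2).choose_spec.1⟩)
    have hFsucc : ∀ j : Fin n,
        F j.succ = ⟨(hstep j (F j.castSucc).1 (F j.castSucc).2).choose,
          (hstep j (F j.castSucc).1 (F j.castSucc).2).choose_spec.1⟩ :=
      fun j => Fin.induction_succ _ _ j
    have hfp : ∀ j : Fin n, p j (F j.castSucc).1 (F j.succ).1 := by
      intro j
      rw [hFsucc j]
      exact (hstep j (F j.castSucc).1 (F j.castSucc).2).choose_spec.2
    refine ⟨fun k => (F k).1, ?_, ?_⟩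
    · rw [hJ, mem_filter, Fintype.mem_piFinset]
      exact ⟨fun k => hAR k (F k).2, hfp⟩
    · show (F 0).1 = b
      rw [show F 0 = ⟨b, hb⟩ from Fin.induction_zero _ _]
  -- injectivity of the head projection on J
  have hinj : ∀ f ∈ J, ∀ g ∈ J, f 0 = g 0 → f = g := by
    intro f hf g hg h0
    rw [hJ, mem_filter, Fintype.mem_piFinset] at hf hg
    funext k
    induction k using Fin.induction with
    | zero => exact h0
    | succ j ih =>
        have hg' := hg.2 j
        rw [← ih] at hg'
        exact hkey j (f j.castSucc) (f j.succ) (hf.1 _) (g j.succ) (hg.1 _)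
          (hf.2 j) hg'
  constructor
  · ext b
    simp only [mem_filter]
    constructor
    · intro hb
      exact ⟨hAR 0 hb, hext b hb⟩
    · rintro ⟨hbR, f, hfJ, rfl⟩
      exact hJA f hfJ 0
  · refine (Finset.card_bij (fun f _ => f 0) ?_ ?_ ?_).symm
    · intro f hf; exact hJA f hf 0
    · intro f hf g hg h; exact hinj f hf g hg h
    · intro b hb
      obtain ⟨f, hfJ, hf0⟩ := hext b hb
      exact ⟨f, hfJ, hf0⟩
end

section
/- Unique right deep tree for a branch with rightmost leaf Rₙ (Lemma 5.4): Let n ≥ 1 and consider the branch join graph on vertices {0, 1, …, n}. If a bijective listing X₀, X₁, …, Xₙ of the vertices is a right-deep-tree order without cross products and X₀ = n, then X_i = n − i for every i; i.e., the only right-deep-tree order without cross products whose rightmost leaf is n is n, n−1, …, 1, 0. -/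
/-- Adjacency in the branch (chain) join graph on vertices `{0, 1, …, n}`: there is an
edge between `k - 1` and `k` for every `1 ≤ k ≤ n` and no other edges. -/
def chainAdj {n : ℕ} (a b : Fin (n + 1)) : Prop :=
  (a : ℕ) + 1 = (b : ℕ) ∨ (b : ℕ) + 1 = (a : ℕ)

/-- **Unique right deep tree for a branch with rightmost leaf `R n` (Lemma 5.4).**
If a bijective listing `X 0, X 1, …, X n` of the vertices of the branch join graph is a
right-deep-tree order without cross products and `X 0 = n`, then `X i = n - i` for every
`i`; i.e. the only such order whose rightmost leaf is `n` is `n, n-1, …, 1, 0`. -/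
theorem chain_right_deep_tree_unique {n : ℕ} (hn : 1 ≤ n)
    (X : Fin (n + 1) → Fin (n + 1)) (hX : Function.Bijective X)
    (hRD : ∀ k : Fin (n + 1), 0 < (k : ℕ) → ∃ j, j < k ∧ chainAdj (X k) (X j))
    (h0 : X 0 = Fin.last n) :
    ∀ i : Fin (n + 1), (X i : ℕ) = n - (i : ℕ) := by
  have key : ∀ m : ℕ, ∀ i : Fin (n + 1), (i : ℕ) ≤ m → (X i : ℕ) = n - (i : ℕ) := by
    intro m
    induction m with
    | zero =>
      intro i hi
      have hi0 : i = 0 := Fin.ext (by simpa using Nat.le_zero.mp hi)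
      subst hi0
      simp [h0]
    | succ m ih =>
      intro i hi
      rcases Nat.lt_or_ge (i : ℕ) (m + 1) with h | h
      · exact ih i (Nat.lt_succ_iff.mp h)
      · have hpos : 0 < (i : ℕ) := by omega
        obtain ⟨j, hjk, hadj⟩ := hRD i hpos
        have hj : (j : ℕ) < (i : ℕ) := hjk
        have hXj : (X j : ℕ) = n - (j : ℕ) := ih j (by omega)
        have hXi_le : (X i : ℕ) ≤ n := Nat.lt_succ_iff.mp (X i).isLt
        have hin : (i : ℕ) ≤ n := Nat.lt_succ_iff.mp i.isLt
        have hjn : (j : ℕ) < n := by omega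
        rcases hadj with h1 | h2
        · -- X i + 1 = X j = n - j, so X i = n - (j+1)
          have hXi : (X i : ℕ) = n - ((j : ℕ) + 1) := by omega
          rcases Nat.lt_or_ge ((j : ℕ) + 1) (i : ℕ) with hlt | hge
          · exfalso
            have hj1 : ((⟨(j : ℕ) + 1, by omega⟩ : Fin (n + 1)) : ℕ) = (j : ℕ) + 1 := rfl
            have hXj1 := ih ⟨(j : ℕ) + 1, by omega⟩ (by simp only [hj1]; omega)
            have heq : X (⟨(j : ℕ) + 1, by omega⟩ : Fin (n + 1)) = X i :=
              Fin.ext (by omega)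
            have := hX.injective heq
            have : ((⟨(j : ℕ) + 1, by omega⟩ : Fin (n + 1)) : ℕ) = (i : ℕ) := by rw [this]
            omega
          · have : (j : ℕ) + 1 = (i : ℕ) := by omega
            omega
        · -- X j + 1 = X i, so X i = n - j + 1
          have hj1 : 1 ≤ (j : ℕ) := by
            by_contra hc
            have : (j : ℕ) = 0 := by omega
            omega
          exfalso
          have hjm : ((⟨(j : ℕ) - 1, by omega⟩ : Fin (n + 1)) : ℕ) = (j : ℕ) - 1 := rfl
          have hXjm := ih ⟨(j : ℕ) - 1, by omega⟩ (by simp only [hjm]; omega)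
          have heq : X (⟨(j : ℕ) - 1, by omega⟩ : Fin (n + 1)) = X i :=
            Fin.ext (by omega)
          have := hX.injective heq
          have : ((⟨(j : ℕ) - 1, by omega⟩ : Fin (n + 1)) : ℕ) = (i : ℕ) := by rw [this]
          omega
  intro i
  exact key (i : ℕ) i le_rfl
end

section
/- Structure of branch orderings (established in the proof of Lemma 5.5): Let X₀, X₁, …, Xₙ be a right-deep-tree order without cross products of the branch join graph on {0, 1, …, n}, and suppose X_k = n for some 1 ≤ k ≤ n. Then {X₀, X₁, …, X_{k−1}} = {n−k, n−k+1, …, n−1} as sets, and X_i = n − i for every i with k < i ≤ n. -/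
open Function

lemma exists_Icc_iff_of_adjacent_notMem {n a m u w : ℕ} (hw : w ≤ n) (ha : a + m ≤ n)
    (hu : a ≤ u ∧ u ≤ a + m) (hwu : w + 1 = u ∨ u + 1 = w) (hw_notMem : ¬ (a ≤ w ∧ w ≤ a + m)) :
    ∃ a', a' + (m + 1) ≤ n ∧
      ∀ v : ℕ, (a ≤ v ∧ v ≤ a + m) ∨ w = v ↔ a' ≤ v ∧ v ≤ a' + (m + 1) := by
  rcases hwu with h | h
  · exact ⟨w, by omega, fun v => by omega⟩
  · exact ⟨a, by omega, fun v => by omega⟩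

lemma exists_lt_and_eq_iff {α β : Type*} [LinearOrder α] {X : α → β} (hX : Injective X)
    (k : α) (v : β) :
    (∃ i, i < k ∧ X i = v) ↔ (∃ i, i ≤ k ∧ X i = v) ∧ v ≠ X k := by
  constructor
  · rintro ⟨i, hik, rfl⟩
    exact ⟨⟨i, hik.le, rfl⟩, hX.ne hik.ne⟩
  · rintro ⟨⟨i, hik, rfl⟩, hne⟩
    exact ⟨i, hik.lt_of_ne (fun h => hne (congrArg X h)), rfl⟩

namespace Fin

lemma exists_val_le_succ_and_eq_iff {α : Type*} {n m : ℕ} (X : Fin (n + 1) → α)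
    (hm : m + 1 ≤ n) (v : α) :
    (∃ i : Fin (n + 1), (i : ℕ) ≤ m + 1 ∧ X i = v) ↔
      (∃ i : Fin (n + 1), (i : ℕ) ≤ m ∧ X i = v) ∨ X ⟨m + 1, by omega⟩ = v := by
  constructor
  · rintro ⟨i, hi, rfl⟩
    rcases Nat.lt_or_eq_of_le hi with hi | hi
    · exact Or.inl ⟨i, Nat.lt_succ_iff.1 hi, rfl⟩
    · exact Or.inr (congrArg X (Fin.ext hi.symm))
  · rintro (⟨i, hi, rfl⟩ | rfl)
    · exact ⟨i, hi.trans m.le_succ, rfl⟩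
    · exact ⟨_, le_rfl, rfl⟩

end Fin

namespace ChainOrder

variable {n : ℕ} {X : Fin (n + 1) → Fin (n + 1)}

theorem exists_prefix_iff_Icc (hX : Injective X)
    (hRD : ∀ k : Fin (n + 1), 0 < (k : ℕ) → ∃ j, j < k ∧ chainAdj (X k) (X j)) :
    ∀ m ≤ n, ∃ a, a + m ≤ n ∧ ∀ v : Fin (n + 1),
      (∃ i : Fin (n + 1), (i : ℕ) ≤ m ∧ X i = v) ↔ a ≤ (v : ℕ) ∧ (v : ℕ) ≤ a + m := by
  intro m hm
  induction m with
  | zero =>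
    refine ⟨X 0, by omega, fun v => ⟨?_, fun hv => ⟨0, le_rfl, Fin.ext (by omega)⟩⟩⟩
    rintro ⟨i, hi, rfl⟩
    rw [show i = 0 from Fin.ext (Nat.le_zero.1 hi)]
    omega
  | succ m ih =>
    obtain ⟨a, ha, hprefix⟩ := ih (by omega)
    set M : Fin (n + 1) := ⟨m + 1, by omega⟩
    obtain ⟨j, hjM, hadj⟩ := hRD M m.succ_pos
    have hXj := (hprefix (X j)).1 ⟨j, Nat.lt_succ_iff.1 hjM, rfl⟩
    have hXM_notMem : ¬ (a ≤ (X M : ℕ) ∧ (X M : ℕ) ≤ a + m) := fun h => by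
      obtain ⟨i, hi, hXi⟩ := (hprefix (X M)).2 h
      have : (i : ℕ) = m + 1 := congrArg Fin.val (hX hXi)
      omega
    obtain ⟨a', ha', hIcc⟩ :=
      exists_Icc_iff_of_adjacent_notMem (X M).is_le ha hXj hadj hXM_notMem
    refine ⟨a', ha', fun v => ?_⟩
    rw [Fin.exists_val_le_succ_and_eq_iff X hm, hprefix, Fin.ext_iff, hIcc]

theorem prefix_iff_of_apply_eq_last (hX : Injective X)
    (hRD : ∀ k : Fin (n + 1), 0 < (k : ℕ) → ∃ j, j < k ∧ chainAdj (X k) (X j))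
    {k : Fin (n + 1)} (hk : X k = Fin.last n) (m : ℕ) (hkm : (k : ℕ) ≤ m) (hmn : m ≤ n)
    (v : Fin (n + 1)) :
    (∃ i : Fin (n + 1), (i : ℕ) ≤ m ∧ X i = v) ↔ n - m ≤ (v : ℕ) := by
  obtain ⟨a, ha, hprefix⟩ := exists_prefix_iff_Icc hX hRD m hmn
  have hn_mem := (hprefix (X k)).1 ⟨k, hkm, rfl⟩
  rw [hk, Fin.val_last] at hn_mem
  rw [hprefix]
  omega

end ChainOrder

open ChainOrder in
theorem chain_order_structure_general {n : ℕ}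
    (X : Fin (n + 1) → Fin (n + 1)) (hX : Function.Bijective X)
    (hRD : ∀ k : Fin (n + 1), 0 < (k : ℕ) → ∃ j, j < k ∧ chainAdj (X k) (X j))
    (k : Fin (n + 1)) (hk : X k = Fin.last n) :
    (∀ v : Fin (n + 1), (∃ i, i < k ∧ X i = v) ↔
        (n - (k : ℕ) ≤ (v : ℕ) ∧ (v : ℕ) < n)) ∧
      (∀ i : Fin (n + 1), k < i → (X i : ℕ) = n - (i : ℕ)) := by
  have hprefix := prefix_iff_of_apply_eq_last hX.injective hRD hk
  refine ⟨fun v => ?_, fun i hki => ?_⟩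
  · have h_mem : (∃ i, i ≤ k ∧ X i = v) ↔ n - k ≤ (v : ℕ) := hprefix k le_rfl k.is_le v
    rw [exists_lt_and_eq_iff hX.injective, hk, h_mem, Ne, Fin.ext_iff, Fin.val_last]
    omega
  · have hki : (k : ℕ) < i := hki
    have h_mem := (hprefix i hki.le i.is_le (X i)).1 ⟨i, le_rfl, rfl⟩
    have h_new : ¬ n - ((i : ℕ) - 1) ≤ (X i : ℕ) := fun h => by
      obtain ⟨j, hj, hXj⟩ := (hprefix (i - 1) (by omega) (by omega) (X i)).2 h
      rw [hX.injective hXj] at hj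
      omega
    omega

/-- **Structure of branch orderings (established in the proof of Lemma 5.5).**
Let `X 0, X 1, …, X n` be a right-deep-tree order without cross products of the branch
join graph and suppose `X k = n` for some `1 ≤ k ≤ n`.  Then
`{X 0, …, X (k-1)} = {n-k, …, n-1}` as sets, and `X i = n - i` for every `i > k`. -/
theorem chain_order_structure {n : ℕ} (hn : 1 ≤ n)
    (X : Fin (n + 1) → Fin (n + 1)) (hX : Function.Bijective X)
    (hRD : ∀ k : Fin (n + 1), 0 < (k : ℕ) → ∃ j, j < k ∧ chainAdj (X k) (X j))
    (k : Fin (n + 1)) (hk1 : 1 ≤ (k : ℕ)) (hk : X k = Fin.last n) :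
    (∀ v : Fin (n + 1), (∃ i, i < k ∧ X i = v) ↔
        (n - (k : ℕ) ≤ (v : ℕ) ∧ (v : ℕ) < n)) ∧
      (∀ i : Fin (n + 1), k < i → (X i : ℕ) = n - (i : ℕ)) :=
  chain_order_structure_general X hX hRD k hk
end

section
/- Single branch in the rightmost leaves (Lemma 5.7): If X₀, X₁, …, X_N is a right-deep-tree order without cross products of the snowflake join graph and X_k = R₀ for some k ≥ 1, then there exists a single branch index i such that {X₀, X₁, …, X_{k−1}} = {R_{i,1}, R_{i,2}, …, R_{i,k}} as sets (in particular k ≤ nᵢ). -/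
/-- Adjacency in the snowflake join graph: the fact vertex `none` is adjacent to the
first vertex `some ⟨i, 0⟩` of every branch `i`, consecutive vertices `some ⟨i, j⟩` and
`some ⟨i, j+1⟩` of each branch are adjacent, and there are no other edges. -/
def snowAdj {m : ℕ} {n : Fin m → ℕ} (a b : Option (Σ i : Fin m, Fin (n i))) : Prop :=
  (∃ (i : Fin m) (j : Fin (n i)), (j : ℕ) = 0 ∧
      ((a = none ∧ b = some ⟨i, j⟩) ∨ (b = none ∧ a = some ⟨i, j⟩))) ∨
    (∃ (i : Fin m) (j j' : Fin (n i)), (j : ℕ) + 1 = (j' : ℕ) ∧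
      ((a = some ⟨i, j⟩ ∧ b = some ⟨i, j'⟩) ∨ (a = some ⟨i, j'⟩ ∧ b = some ⟨i, j⟩)))

/-- **Single branch in the rightmost leaves (Lemma 5.7).**
If `X 0, X 1, …, X N` is a right-deep-tree order without cross products of the snowflake
join graph and `X k` is the fact vertex for some `k ≥ 1`, then there is a single branch
`i` such that `{X 0, …, X (k-1)} = {R_{i,1}, …, R_{i,k}}` as sets (in particular
`k ≤ n i`). -/
theorem snowflake_single_branch {m : ℕ} {n : Fin m → ℕ}
    (hn : ∀ i, 1 ≤ n i)
    (X : Fin ((∑ i, n i) + 1) → Option (Σ i : Fin m, Fin (n i)))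
    (hX : Function.Bijective X)
    (hRD : ∀ k : Fin ((∑ i, n i) + 1), 0 < (k : ℕ) →
      ∃ l, l < k ∧ snowAdj (X k) (X l))
    (k : Fin ((∑ i, n i) + 1)) (hk1 : 1 ≤ (k : ℕ)) (hk : X k = none) :
    ∃ i : Fin m, (k : ℕ) ≤ n i ∧
      (∀ l, l < k → ∃ j : Fin (n i), (j : ℕ) < (k : ℕ) ∧ X l = some ⟨i, j⟩) ∧
      (∀ j : Fin (n i), (j : ℕ) < (k : ℕ) → ∃ l, l < k ∧ X l = some ⟨i, j⟩) := by
  classical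
  have hksucc : (k : ℕ) < (∑ i, n i) + 1 := k.isLt
  -- X 0 is some
  have h0ne : X 0 ≠ none := by
    intro h
    have h2 : (0 : Fin ((∑ i, n i) + 1)) = k := hX.injective (h.trans hk.symm)
    have h3 : (0 : ℕ) = (k : ℕ) := congrArg Fin.val h2
    omega
  obtain ⟨⟨i, j0⟩, hX0⟩ : ∃ s, X 0 = some s := by
    cases hXv : X 0 with
    | none => exact absurd hXv h0ne
    | some s => exact ⟨s, rfl⟩
  have sinj : ∀ (a b : Fin (n i)), (⟨i, a⟩ : Σ i', Fin (n i')) = ⟨i, b⟩ → a = b := by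
    intro a b h
    simpa using h
  -- main inductive claim
  have key : ∀ l : ℕ, ∀ lf : Fin ((∑ i, n i) + 1), (lf : ℕ) = l → lf < k →
      ∃ j : Fin (n i), X lf = some ⟨i, j⟩ ∧
        ∀ j' : ℕ, min (j0 : ℕ) (j : ℕ) ≤ j' → j' ≤ max (j0 : ℕ) (j : ℕ) →
          ∃ lf' : Fin ((∑ i, n i) + 1), lf' < k ∧ ∃ jj : Fin (n i),
            X lf' = some ⟨i, jj⟩ ∧ (jj : ℕ) = j' := by
    intro l
    induction l using Nat.strong_induction_on with
    | _ l IH =>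
      intro lf hlf hlk
      rcases Nat.eq_zero_or_pos l with hl0 | hlpos
      · have hlf0 : lf = 0 := Fin.ext (by simp only [Fin.val_zero]; omega)
        subst hlf0
        refine ⟨j0, hX0, ?_⟩
        intro j' h1 h2
        have hj' : j' = (j0 : ℕ) := by omega
        exact ⟨0, hlk, j0, hX0, hj'.symm⟩
      · obtain ⟨lp, hlpl, hadj⟩ := hRD lf (by omega)
        have hlpk : lp < k := lt_trans hlpl hlk
        have hlpval : (lp : ℕ) < l := by
          have := hlpl
          simp [Fin.lt_def, hlf] at this
          omega
        obtain ⟨jb, hXlp, hull⟩ := IH lp hlpval lp rfl hlpk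
        have hlfne : X lf ≠ none := by
          intro h
          have h2 : lf = k := hX.injective (h.trans hk.symm)
          rw [h2] at hlk
          exact absurd hlk (lt_irrefl k)
        rcases hadj with ⟨i', jz, hjz0, hcase⟩ | ⟨i', ja, jbb, hstep, hcase⟩
        · rcases hcase with ⟨ha, _⟩ | ⟨hb, _⟩
          · exact absurd ha hlfne
          · rw [hXlp] at hb; exact absurd hb (by simp)
        · rcases hcase with ⟨ha, hb⟩ | ⟨ha, hb⟩
          · -- X lf = some ⟨i', ja⟩, X lp = some ⟨i', jbb⟩, ja + 1 = jbb
            rw [hXlp] at hb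
            have heq := Option.some.inj hb
            injection heq with hi hj
            subst hi
            have hjbb : jb = jbb := eq_of_heq hj
            subst hjbb
            refine ⟨ja, ha, ?_⟩
            intro j' h1 h2
            by_cases hje : j' = (ja : ℕ)
            · exact ⟨lf, hlk, ja, ha, hje.symm⟩
            · exact hull j' (by omega) (by omega)
          · -- X lf = some ⟨i', jbb⟩, X lp = some ⟨i', ja⟩, ja + 1 = jbb
            rw [hXlp] at hb
            have heq := Option.some.inj hb
            injection heq with hi hj
            subst hi
            have hja : jb = ja := eq_of_heq hj
            subst hja
            refine ⟨jbb, ha, ?_⟩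
            intro j' h1 h2
            by_cases hje : j' = (jbb : ℕ)
            · exact ⟨lf, hlk, jbb, ha, hje.symm⟩
            · exact hull j' (by omega) (by omega)
  have key' : ∀ lf : Fin ((∑ i, n i) + 1), lf < k →
      ∃ j : Fin (n i), X lf = some ⟨i, j⟩ ∧
        ∀ j' : ℕ, min (j0 : ℕ) (j : ℕ) ≤ j' → j' ≤ max (j0 : ℕ) (j : ℕ) →
          ∃ lf' : Fin ((∑ i, n i) + 1), lf' < k ∧ ∃ jj : Fin (n i),
            X lf' = some ⟨i, jj⟩ ∧ (jj : ℕ) = j' :=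
    fun lf hlf => key lf lf rfl hlf
  -- membership predicate
  set Tmem : ℕ → Prop := fun jn => ∃ lf' : Fin ((∑ i, n i) + 1), lf' < k ∧ ∃ jj : Fin (n i),
      X lf' = some ⟨i, jj⟩ ∧ (jj : ℕ) = jn with hTmem
  -- value 0 occurs in the prefix
  have h0T : ∀ jn : ℕ, jn ≤ (j0 : ℕ) → Tmem jn := by
    obtain ⟨l0, hl0k, hadj⟩ := hRD k (by omega)
    rw [hk] at hadj
    have : ∃ i' : Fin m, ∃ jz : Fin (n i'), (jz : ℕ) = 0 ∧ X l0 = some ⟨i', jz⟩ := by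
      rcases hadj with ⟨i', jz, hjz0, hcase⟩ | ⟨i', ja, jbb, hstep, hcase⟩
      · rcases hcase with ⟨_, hb⟩ | ⟨hb, ha⟩
        · exact ⟨i', jz, hjz0, hb⟩
        · exact absurd ha (by simp)
      · rcases hcase with ⟨ha, _⟩ | ⟨ha, _⟩
        · exact absurd ha (by simp)
        · exact absurd ha (by simp)
    obtain ⟨i', jz, hjz0, hXl0⟩ := this
    obtain ⟨jb, hXl0', hull⟩ := key' l0 hl0k
    rw [hXl0'] at hXl0
    have heq := Option.some.inj hXl0
    injection heq with hi hj
    subst hi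
    have hjz : jb = jz := eq_of_heq hj
    subst hjz
    intro jn hjn
    exact hull jn (by omega) (by omega)
  -- downward closedness
  have hdown : ∀ a b : ℕ, a ≤ b → Tmem b → Tmem a := by
    rintro a b hab ⟨lb, hlbk, jjb, hXlb, hjjb⟩
    obtain ⟨j, hXlb', hull⟩ := key' lb hlbk
    rw [hXlb'] at hXlb
    have hj : j = jjb := sinj _ _ (Option.some.inj hXlb)
    subst hj
    by_cases ha0 : a ≤ (j0 : ℕ)
    · exact h0T a ha0
    · exact hull a (by omega) (by omega)
  -- the Finset of values appearing before k
  set T : Finset (Fin (n i)) :=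
    Finset.univ.filter (fun j => ∃ lf' : Fin ((∑ i, n i) + 1), lf' < k ∧ X lf' = some ⟨i, j⟩)
    with hT
  have hexj : ∀ (lf : Fin ((∑ i, n i) + 1)), lf < k → ∃ j : Fin (n i), X lf = some ⟨i, j⟩ := by
    intro lf h
    obtain ⟨j, hj, -⟩ := key' lf h
    exact ⟨j, hj⟩
  choose jv hjv using hexj
  have hcardT : T.card = (k : ℕ) := by
    rw [← Fin.card_Iio (b := k)]
    symm
    refine Finset.card_bij (fun lf hlf => jv lf (Finset.mem_Iio.mp hlf)) ?_ ?_ ?_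
    · intro lf hlf
      simp only [hT, Finset.mem_filter, Finset.mem_univ, true_and]
      exact ⟨lf, Finset.mem_Iio.mp hlf, hjv lf _⟩
    · intro a ha b hb hab
      have hab' : jv a (Finset.mem_Iio.mp ha) = jv b (Finset.mem_Iio.mp hb) := hab
      apply hX.injective
      rw [hjv a (Finset.mem_Iio.mp ha), hjv b (Finset.mem_Iio.mp hb), hab']
    · intro b hb
      simp only [hT, Finset.mem_filter, Finset.mem_univ, true_and] at hb
      obtain ⟨lf, hlfk, hXlf⟩ := hb
      refine ⟨lf, Finset.mem_Iio.mpr hlfk, ?_⟩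
      have := (hjv lf hlfk).symm.trans hXlf
      exact sinj _ _ (Option.some.inj this)
  set T' : Finset ℕ := T.image Fin.val with hT'
  have hcardT' : T'.card = (k : ℕ) := by
    rw [hT', Finset.card_image_of_injective _ Fin.val_injective, hcardT]
  have hmemT' : ∀ jn : ℕ, jn ∈ T' ↔ Tmem jn := by
    intro jn
    simp only [hT', hT, Finset.mem_image, Finset.mem_filter, Finset.mem_univ, true_and,
      hTmem]
    constructor
    · rintro ⟨jj, ⟨lf, hlf, hXlf⟩, hv⟩
      exact ⟨lf, hlf, jj, hXlf, hv⟩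
    · rintro ⟨lf, hlf, jj, hXlf, hv⟩
      exact ⟨jj, ⟨lf, hlf, hXlf⟩, hv⟩
  have claim1 : ∀ jn : ℕ, jn < (k : ℕ) → jn ∈ T' := by
    by_contra hcon
    push_neg at hcon
    obtain ⟨jn, hjnk, hjn⟩ := hcon
    have hsub : T' ⊆ Finset.range jn := by
      intro b hb
      rw [Finset.mem_range]
      by_contra hble
      push_neg at hble
      exact hjn ((hmemT' jn).mpr (hdown jn b hble ((hmemT' b).mp hb)))
    have := Finset.card_le_card hsub
    rw [hcardT', Finset.card_range] at this
    omega
  have claim2 : ∀ jn ∈ T', jn < (k : ℕ) := by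
    intro jn hjn
    by_contra hge
    push_neg at hge
    have hnotin : jn ∉ Finset.range (k : ℕ) := by simp; omega
    have hsub : insert jn (Finset.range (k : ℕ)) ⊆ T' := by
      refine Finset.insert_subset hjn ?_
      intro b hb
      exact claim1 b (Finset.mem_range.mp hb)
    have hc := Finset.card_le_card hsub
    rw [Finset.card_insert_of_notMem hnotin, Finset.card_range, hcardT'] at hc
    omega
  refine ⟨i, ?_, ?_, ?_⟩
  · -- k ≤ n i
    have h1 : (k : ℕ) - 1 ∈ T' := claim1 _ (by omega)
    rw [hmemT'] at h1
    obtain ⟨lf, hlf, jj, hXlf, hv⟩ := h1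
    have := jj.isLt
    omega
  · intro l hl
    obtain ⟨j, hXl, -⟩ := key' l hl
    have hjT : (j : ℕ) ∈ T' := by
      rw [hmemT']
      exact ⟨l, hl, j, hXl, rfl⟩
    exact ⟨j, claim2 _ hjT, hXl⟩
  · intro j hj
    have hjT : (j : ℕ) ∈ T' := claim1 _ hj
    rw [hmemT'] at hjT
    obtain ⟨lf, hlf, jj, hXlf, hv⟩ := hjT
    have : jj = j := Fin.val_injective hv
    subst this
    exact ⟨lf, hlf, hXlf⟩
end

section
/- Snowflake absorption (core of the proof of Lemma 5.3): For a snowflake query with PKFK joins, the fact table filtered by the cascaded branch semi-joins has the same cardinality as the full snowflake join: (R₀').card = J.card. -/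
open Finset

/-- **Snowflake absorption (core of the proof of Lemma 5.3).**
For a snowflake query with PKFK joins (branch `i` has relations
`R i 0, R i 1, …, R i (last)`), let `A` be the cascaded semi-join (bitvector) filters
along each branch and `R₀'` the fact table filtered by the heads of all branches.  Then
the filtered fact table has the same cardinality as the full snowflake join `J`. -/
theorem snowflake_absorption {α : Type*} {m : ℕ} {n : Fin m → ℕ}
    {β : ∀ i : Fin m, Fin (n i + 1) → Type*}
    (R₀ : Finset α) (R : ∀ i j, Finset (β i j))
    (phead : ∀ i, α → β i 0 → Prop) [∀ i a b, Decidable (phead i a b)]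
    (pstep : ∀ i (j : Fin (n i)), β i j.castSucc → β i j.succ → Prop)
    [∀ i j b b', Decidable (pstep i j b b')]
    (hkeyhead : ∀ (i : Fin m) (a : α), ∀ b₁ ∈ R i 0, ∀ b₂ ∈ R i 0,
      phead i a b₁ → phead i a b₂ → b₁ = b₂)
    (hkeystep : ∀ (i : Fin m) (j : Fin (n i)) (b : β i j.castSucc),
      ∀ b₁ ∈ R i j.succ, ∀ b₂ ∈ R i j.succ,
        pstep i j b b₁ → pstep i j b b₂ → b₁ = b₂)
    (A : ∀ i j, Finset (β i j))
    (hAlast : ∀ i, A i (Fin.last (n i)) = R i (Fin.last (n i)))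
    (hAstep : ∀ (i : Fin m) (j : Fin (n i)), A i j.castSucc =
      (R i j.castSucc).filter fun b => ∃ b' ∈ A i j.succ, pstep i j b b')
    (R₀' : Finset α)
    (hR₀' : R₀' = R₀.filter fun a => ∀ i, ∃ b ∈ A i 0, phead i a b)
    (J : Finset (α × ∀ i, ∀ j, β i j))
    (hJ : J = ((R₀ ×ˢ Fintype.piFinset fun i => Fintype.piFinset (R i)).filter
      fun x => (∀ i, phead i x.1 (x.2 i 0)) ∧
        ∀ i (j : Fin (n i)), pstep i j (x.2 i j.castSucc) (x.2 i j.succ))) :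
    R₀'.card = J.card := by
  classical
  subst hR₀' hJ
  -- A i j ⊆ R i j
  have hAsub : ∀ i j, A i j ⊆ R i j := by
    intro i j
    induction j using Fin.lastCases with
    | last => rw [hAlast]
    | cast j => rw [hAstep]; exact Finset.filter_subset _ _
  -- every tuple of the join lies in all the A's
  have hmemA : ∀ (f : ∀ i j, β i j), (∀ i j, f i j ∈ R i j) →
      (∀ i (j : Fin (n i)), pstep i j (f i j.castSucc) (f i j.succ)) →
      ∀ i j, f i j ∈ A i j := by
    intro f hfR hfs i j
    induction j using Fin.reverseInduction with
    | last => rw [hAlast]; exact hfR i _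
    | cast j ih =>
        rw [hAstep]
        exact Finset.mem_filter.mpr ⟨hfR i _, ⟨f i j.succ, ih, hfs i j⟩⟩
  -- uniqueness of the chain attached to a fact row
  have huniq : ∀ (a : α) (f g : ∀ i j, β i j),
      (∀ i j, f i j ∈ R i j) → (∀ i j, g i j ∈ R i j) →
      (∀ i, phead i a (f i 0)) → (∀ i, phead i a (g i 0)) →
      (∀ i (j : Fin (n i)), pstep i j (f i j.castSucc) (f i j.succ)) →
      (∀ i (j : Fin (n i)), pstep i j (g i j.castSucc) (g i j.succ)) → f = g := by
    intro a f g hf hg hfh hgh hfs hgs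
    funext i j
    induction j using Fin.induction with
    | zero => exact hkeyhead i a _ (hf i 0) _ (hg i 0) (hfh i) (hgh i)
    | succ j ih =>
        exact hkeystep i j _ _ (hf i _) _ (hg i _) (ih ▸ hfs i j) (hgs i j)
  -- one step of the chain construction
  have step : ∀ (i : Fin m) (j : Fin (n i)) (x : {x : β i j.castSucc // x ∈ A i j.castSucc}),
      {y : β i j.succ // y ∈ A i j.succ ∧ pstep i j x.1 y} := by
    intro i j x
    obtain ⟨x, hxA⟩ := x
    rw [hAstep] at hxA
    have h := (Finset.mem_filter.mp hxA).2
    exact ⟨h.choose, h.choose_spec.1, h.choose_spec.2⟩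
  -- construction of the chain from a filtered fact row
  have hconstr : ∀ (a : α), (∀ i, ∃ b ∈ A i 0, phead i a b) →
      ∃ f : ∀ i j, β i j, (∀ i j, f i j ∈ A i j) ∧ (∀ i, phead i a (f i 0)) ∧
        (∀ i (j : Fin (n i)), pstep i j (f i j.castSucc) (f i j.succ)) := by
    intro a ha
    have hbranch : ∀ i, ∃ h : ∀ j, β i j, (∀ j, h j ∈ A i j) ∧ phead i a (h 0) ∧
        ∀ j : Fin (n i), pstep i j (h j.castSucc) (h j.succ) := by
      intro i
      obtain ⟨b0, hb0A, hb0p⟩ := ha i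
      let g : ∀ j : Fin (n i + 1), {x : β i j // x ∈ A i j} :=
        Fin.induction ⟨b0, hb0A⟩ (fun j ih => ⟨(step i j ih).1, (step i j ih).2.1⟩)
      refine ⟨fun j => (g j).1, fun j => (g j).2, ?_, ?_⟩
      · show phead i a (g 0).1
        have h0 : g 0 = ⟨b0, hb0A⟩ := Fin.induction_zero _ _
        rw [h0]
        exact hb0p
      · intro j
        have hs : g j.succ = ⟨(step i j (g j.castSucc)).1, (step i j (g j.castSucc)).2.1⟩ :=
          Fin.induction_succ _ _ _
        show pstep i j (g j.castSucc).1 (g j.succ).1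
        rw [hs]
        exact (step i j (g j.castSucc)).2.2
    choose f hf1 hf2 hf3 using hbranch
    exact ⟨f, fun i j => hf1 i j, hf2, hf3⟩
  refine Finset.card_bij
    (fun a ha => (a, (hconstr a (Finset.mem_filter.mp ha).2).choose)) ?_ ?_ ?_
  · intro a ha
    obtain ⟨hfA, hfh, hfs⟩ := (hconstr a (Finset.mem_filter.mp ha).2).choose_spec
    refine Finset.mem_filter.mpr ⟨?_, hfh, hfs⟩
    refine Finset.mem_product.mpr ⟨(Finset.mem_filter.mp ha).1, ?_⟩
    rw [Fintype.mem_piFinset]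
    intro i
    rw [Fintype.mem_piFinset]
    exact fun j => hAsub i j (hfA i j)
  · intro a₁ h₁ a₂ h₂ h
    exact congrArg Prod.fst h
  · intro x hx
    obtain ⟨hxmem, hxh, hxs⟩ := Finset.mem_filter.mp hx
    obtain ⟨hx0, hx2⟩ := Finset.mem_product.mp hxmem
    have hxR : ∀ i j, x.2 i j ∈ R i j := by
      intro i j
      have := (Fintype.mem_piFinset.mp hx2) i
      exact Fintype.mem_piFinset.mp this j
    have ha : x.1 ∈ R₀.filter fun a => ∀ i, ∃ b ∈ A i 0, phead i a b := by
      refine Finset.mem_filter.mpr ⟨hx0, fun i => ⟨x.2 i 0, hmemA x.2 hxR hxs i 0, hxh i⟩⟩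
    refine ⟨x.1, ha, ?_⟩
    obtain ⟨hfA, hfh, hfs⟩ := (hconstr x.1 (Finset.mem_filter.mp ha).2).choose_spec
    have : (hconstr x.1 (Finset.mem_filter.mp ha).2).choose = x.2 :=
      huniq x.1 _ _ (fun i j => hAsub i j (hfA i j)) hxR hfh hxh hfs hxs
    exact Prod.ext rfl this
end

section
/- Downward-closed partial snowflake join invariance (core of the proof of Lemma 5.3): For a snowflake query with PKFK joins and every downward-closed set s of dimension vertices, the partial snowflake join satisfies (J(s)).card = (R₀').card. -/
/-! Projecting to the fact tuple is a bijection `J(s) → R₀'`. It is injective because, by the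
key conditions, the match at a vertex `(i, j+1)` is determined by the match at `(i, j)`, which
lies in `s` by downward closure. It is surjective because the semi-join filters `A` let every
`a ∈ R₀'` be extended, branch by branch, to a full chain of matches. -/

open Finset

/-- The partial snowflake join `J(s)` of the filtered fact table `R₀'` with the filtered
dimension tables `A v` for `v ∈ s`: the pairs `(a, f)` with `a ∈ R₀'`,
`f ∈ s.pi (fun v => A v.1 v.2)`, `phead i a (f ⟨i, 0⟩)` whenever `⟨i, 0⟩ ∈ s`, and
`pstep i j (f ⟨i, j⟩) (f ⟨i, j+1⟩)` whenever `⟨i, j+1⟩ ∈ s` (with `⟨i, j⟩ ∈ s` by downward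
closure). -/
def snowPartialJoin {α : Type*} {m : ℕ} {n : Fin m → ℕ}
    {β : ∀ i : Fin m, Fin (n i + 1) → Type*}
    (R₀' : Finset α) (A : ∀ i j, Finset (β i j))
    (phead : ∀ i, α → β i 0 → Prop) [∀ i a b, Decidable (phead i a b)]
    (pstep : ∀ i (j : Fin (n i)), β i j.castSucc → β i j.succ → Prop)
    [∀ i j b b', Decidable (pstep i j b b')]
    (s : Finset (Σ i : Fin m, Fin (n i + 1))) :
    Finset (α × ∀ v ∈ s, β v.1 v.2) :=
  (R₀' ×ˢ s.pi fun v => A v.1 v.2).filter fun x =>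
    (∀ (i : Fin m) (h : (⟨i, 0⟩ : Σ i : Fin m, Fin (n i + 1)) ∈ s),
        phead i x.1 (x.2 ⟨i, 0⟩ h)) ∧
      (∀ (i : Fin m) (j : Fin (n i))
        (h : (⟨i, j.succ⟩ : Σ i : Fin m, Fin (n i + 1)) ∈ s)
        (h' : (⟨i, j.castSucc⟩ : Σ i : Fin m, Fin (n i + 1)) ∈ s),
        pstep i j (x.2 ⟨i, j.castSucc⟩ h') (x.2 ⟨i, j.succ⟩ h))

theorem Fin.exists_chain_of_forall_exists {k : ℕ} {γ : Fin (k + 1) → Type*}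
    (S : ∀ j, Set (γ j)) (r : ∀ j : Fin k, γ j.castSucc → γ j.succ → Prop)
    (hr : ∀ j : Fin k, ∀ b ∈ S j.castSucc, ∃ b' ∈ S j.succ, r j b b')
    {b₀ : γ 0} (hb₀ : b₀ ∈ S 0) :
    ∃ g : ∀ j, γ j, g 0 = b₀ ∧ (∀ j, g j ∈ S j) ∧ ∀ j, r j (g j.castSucc) (g j.succ) := by
  choose next hnextS hnextr using hr
  let G : ∀ j, S j := fun j =>
    Fin.induction ⟨b₀, hb₀⟩ (fun j b => ⟨next j b b.2, hnextS j b b.2⟩) j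
  refine ⟨fun j => G j, rfl, fun j => (G j).2, fun j => ?_⟩
  simp only [G, Fin.induction_succ]
  exact hnextr j _ _

section SnowPartialJoin

variable {α : Type*} {m : ℕ} {n : Fin m → ℕ} {β : ∀ i : Fin m, Fin (n i + 1) → Type*}
  {R₀' : Finset α} {A : ∀ i j, Finset (β i j)}
  {phead : ∀ i, α → β i 0 → Prop} [∀ i a b, Decidable (phead i a b)]
  {pstep : ∀ i (j : Fin (n i)), β i j.castSucc → β i j.succ → Prop}
  [∀ i j b b', Decidable (pstep i j b b')]
  {s : Finset (Σ i : Fin m, Fin (n i + 1))}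

theorem mem_snowPartialJoin {x : α × ∀ v ∈ s, β v.1 v.2} :
    x ∈ snowPartialJoin R₀' A phead pstep s ↔
      x.1 ∈ R₀' ∧ (∀ v (hv : v ∈ s), x.2 v hv ∈ A v.1 v.2) ∧
      (∀ (i : Fin m) (h : (⟨i, 0⟩ : Σ i : Fin m, Fin (n i + 1)) ∈ s),
        phead i x.1 (x.2 ⟨i, 0⟩ h)) ∧
      (∀ (i : Fin m) (j : Fin (n i))
        (h : (⟨i, j.succ⟩ : Σ i : Fin m, Fin (n i + 1)) ∈ s)
        (h' : (⟨i, j.castSucc⟩ : Σ i : Fin m, Fin (n i + 1)) ∈ s),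
        pstep i j (x.2 ⟨i, j.castSucc⟩ h') (x.2 ⟨i, j.succ⟩ h)) := by
  simp [snowPartialJoin, Finset.mem_pi, and_assoc]

theorem snowPartialJoin_injOn_fst
    (hkeyhead : ∀ (i : Fin m) (a : α), ∀ b₁ ∈ A i 0, ∀ b₂ ∈ A i 0,
      phead i a b₁ → phead i a b₂ → b₁ = b₂)
    (hkeystep : ∀ (i : Fin m) (j : Fin (n i)) (b : β i j.castSucc),
      ∀ b₁ ∈ A i j.succ, ∀ b₂ ∈ A i j.succ, pstep i j b b₁ → pstep i j b b₂ → b₁ = b₂)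
    (hdc : ∀ (i : Fin m) (j : Fin (n i)),
      (⟨i, j.succ⟩ : Σ i : Fin m, Fin (n i + 1)) ∈ s →
        (⟨i, j.castSucc⟩ : Σ i : Fin m, Fin (n i + 1)) ∈ s) :
    Set.InjOn Prod.fst (snowPartialJoin R₀' A phead pstep s : Set (α × ∀ v ∈ s, β v.1 v.2)) := by
  intro x hx y hy hxy
  rw [Finset.mem_coe, mem_snowPartialJoin] at hx hy
  obtain ⟨-, hxA, hxhead, hxstep⟩ := hx
  obtain ⟨-, hyA, hyhead, hystep⟩ := hy
  refine Prod.ext hxy (funext fun ⟨i, j⟩ => funext fun h => ?_)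
  induction j using Fin.induction with
  | zero =>
    exact hkeyhead i x.1 _ (hxA _ h) _ (hyA _ h) (hxhead i h) (hxy ▸ hyhead i h)
  | succ j ih =>
    have hpred := hdc i j h
    exact hkeystep i j _ _ (hxA _ h) _ (hyA _ h) (hxstep i j h hpred)
      (ih hpred ▸ hystep i j h hpred)

theorem exists_mem_snowPartialJoin {a : α} (ha : a ∈ R₀')
    (hhead : ∀ i, ∃ b ∈ A i 0, phead i a b)
    (hstep : ∀ (i : Fin m) (j : Fin (n i)),
      ∀ b ∈ A i j.castSucc, ∃ b' ∈ A i j.succ, pstep i j b b') :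
    ∃ f, (a, f) ∈ snowPartialJoin R₀' A phead pstep s := by
  choose b₀ hb₀A hb₀ using hhead
  choose g hg0 hgA hgstep using fun i =>
    Fin.exists_chain_of_forall_exists (fun j => (A i j : Set (β i j))) (pstep i) (hstep i)
      (hb₀A i)
  refine ⟨fun v _ => g v.1 v.2, mem_snowPartialJoin.2 ⟨ha, fun v _ => hgA v.1 v.2,
    fun i _ => ?_, fun i j _ _ => hgstep i j⟩⟩
  simpa only [hg0] using hb₀ i

end SnowPartialJoin

/-- **Downward-closed partial snowflake join invariance
(core of the proof of Lemma 5.3).**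
For a snowflake query with PKFK joins, the partial snowflake join over any
downward-closed set `s` of dimension vertices has the same cardinality as the filtered
fact table `R₀'`. -/
theorem snowflake_partial_join_invariance {α : Type*} {m : ℕ} {n : Fin m → ℕ}
    {β : ∀ i : Fin m, Fin (n i + 1) → Type*}
    (R₀ : Finset α) (R : ∀ i j, Finset (β i j))
    (phead : ∀ i, α → β i 0 → Prop) [∀ i a b, Decidable (phead i a b)]
    (pstep : ∀ i (j : Fin (n i)), β i j.castSucc → β i j.succ → Prop)
    [∀ i j b b', Decidable (pstep i j b b')]
    (hkeyhead : ∀ (i : Fin m) (a : α), ∀ b₁ ∈ R i 0, ∀ b₂ ∈ R i 0,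
      phead i a b₁ → phead i a b₂ → b₁ = b₂)
    (hkeystep : ∀ (i : Fin m) (j : Fin (n i)) (b : β i j.castSucc),
      ∀ b₁ ∈ R i j.succ, ∀ b₂ ∈ R i j.succ,
        pstep i j b b₁ → pstep i j b b₂ → b₁ = b₂)
    (A : ∀ i j, Finset (β i j))
    (hAlast : ∀ i, A i (Fin.last (n i)) = R i (Fin.last (n i)))
    (hAstep : ∀ (i : Fin m) (j : Fin (n i)), A i j.castSucc =
      (R i j.castSucc).filter fun b => ∃ b' ∈ A i j.succ, pstep i j b b')
    (R₀' : Finset α)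
    (hR₀' : R₀' = R₀.filter fun a => ∀ i, ∃ b ∈ A i 0, phead i a b) :
    ∀ s : Finset (Σ i : Fin m, Fin (n i + 1)),
      (∀ (i : Fin m) (j : Fin (n i)),
        (⟨i, j.succ⟩ : Σ i : Fin m, Fin (n i + 1)) ∈ s →
          (⟨i, j.castSucc⟩ : Σ i : Fin m, Fin (n i + 1)) ∈ s) →
      (snowPartialJoin R₀' A phead pstep s).card = R₀'.card := by
  have hAR : ∀ i j, A i j ⊆ R i j := fun i j => by
    induction j using Fin.lastCases with
    | last => rw [hAlast]
    | cast j => rw [hAstep]; exact filter_subset _ _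
  have hstep : ∀ i (j : Fin (n i)), ∀ b ∈ A i j.castSucc, ∃ b' ∈ A i j.succ, pstep i j b b' :=
    fun i j b hb => by rw [hAstep] at hb; exact (mem_filter.1 hb).2
  intro s hdc
  refine card_nbij Prod.fst (fun x hx => (mem_snowPartialJoin.1 hx).1)
    (snowPartialJoin_injOn_fst
      (fun i a b₁ h₁ b₂ h₂ => hkeyhead i a b₁ (hAR _ _ h₁) b₂ (hAR _ _ h₂))
      (fun i j b b₁ h₁ b₂ h₂ => hkeystep i j b b₁ (hAR _ _ h₁) b₂ (hAR _ _ h₂)) hdc)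
    fun a ha => ?_
  obtain ⟨f, hf⟩ := exists_mem_snowPartialJoin (s := s) ha
    (by rw [hR₀'] at ha; exact (mem_filter.1 ha).2) hstep
  exact ⟨(a, f), hf, rfl⟩
end

section
/- Equal cost for partially-ordered right deep trees of a snowflake query (Lemma 5.3): For a snowflake query with PKFK joins, let Y₁, …, Y_N be an enumeration of the N dimension vertices such that every vertex R_{i,j} with j ≥ 2 appears after its parent R_{i,j−1} (so that R₀, Y₁, …, Y_N is a partially ordered right deep tree, and every prefix {Y₁, …, Y_k} is downward closed). Define its cost as C(Y) = (Σ_{i,j} (A_{i,j}).card) + (R₀').card + Σ_{k=1}^{N} (J({Y₁, …, Y_k})).card. Then any two such enumerations Y and Z have equal cost: C(Y) = C(Z). -/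
open Finset

/-- The set `{Y 0, Y 1, …, Y (k-1)}` of the first `k` dimension vertices in the
enumeration `Y`. -/
def snowPrefix {m : ℕ} {n : Fin m → ℕ} {N : ℕ}
    (Y : Fin N → Σ i : Fin m, Fin (n i + 1)) (k : ℕ) :
    Finset (Σ i : Fin m, Fin (n i + 1)) :=
  (Finset.univ.filter fun t : Fin N => (t : ℕ) < k).image Y

/-- The cost `C_out` of the partially ordered right deep tree
`T(R₀, A (Y 0), A (Y 1), …, A (Y (N-1)))`:
`(Σ_{i,j} |A i j|) + |R₀'| + Σ_{k=1}^{N} |J({Y 0, …, Y (k-1)})|`. -/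
def snowCost {α : Type*} {m : ℕ} {n : Fin m → ℕ} {N : ℕ}
    {β : ∀ i : Fin m, Fin (n i + 1) → Type*}
    (R₀' : Finset α) (A : ∀ i j, Finset (β i j))
    (phead : ∀ i, α → β i 0 → Prop) [∀ i a b, Decidable (phead i a b)]
    (pstep : ∀ i (j : Fin (n i)), β i j.castSucc → β i j.succ → Prop)
    [∀ i j b b', Decidable (pstep i j b b')]
    (Y : Fin N → Σ i : Fin m, Fin (n i + 1)) : ℕ :=
  (∑ i, ∑ j, (A i j).card) + R₀'.card +
    ∑ k ∈ Finset.range N,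
      (snowPartialJoin R₀' A phead pstep (snowPrefix Y (k + 1))).card

/-- **Equal cost for partially-ordered right deep trees of a snowflake query
(Lemma 5.3).**
For a snowflake query with PKFK joins, any two enumerations of the dimension vertices in
which every non-head vertex appears after its parent (i.e. any two partially ordered
right deep trees with the fact table as rightmost leaf) have equal cost. -/
theorem snowflake_partially_ordered_equal_cost {α : Type*} {m : ℕ} {n : Fin m → ℕ}
    {β : ∀ i : Fin m, Fin (n i + 1) → Type*}
    (R₀ : Finset α) (R : ∀ i j, Finset (β i j))
    (phead : ∀ i, α → β i 0 → Prop) [∀ i a b, Decidable (phead i a b)]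
    (pstep : ∀ i (j : Fin (n i)), β i j.castSucc → β i j.succ → Prop)
    [∀ i j b b', Decidable (pstep i j b b')]
    (hkeyhead : ∀ (i : Fin m) (a : α), ∀ b₁ ∈ R i 0, ∀ b₂ ∈ R i 0,
      phead i a b₁ → phead i a b₂ → b₁ = b₂)
    (hkeystep : ∀ (i : Fin m) (j : Fin (n i)) (b : β i j.castSucc),
      ∀ b₁ ∈ R i j.succ, ∀ b₂ ∈ R i j.succ,
        pstep i j b b₁ → pstep i j b b₂ → b₁ = b₂)
    (A : ∀ i j, Finset (β i j))
    (hAlast : ∀ i, A i (Fin.last (n i)) = R i (Fin.last (n i)))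
    (hAstep : ∀ (i : Fin m) (j : Fin (n i)), A i j.castSucc =
      (R i j.castSucc).filter fun b => ∃ b' ∈ A i j.succ, pstep i j b b')
    (R₀' : Finset α)
    (hR₀' : R₀' = R₀.filter fun a => ∀ i, ∃ b ∈ A i 0, phead i a b) :
    ∀ Y Z : Fin (∑ i, (n i + 1)) → Σ i : Fin m, Fin (n i + 1),
      Function.Bijective Y → Function.Bijective Z →
      (∀ (k : Fin (∑ i, (n i + 1))) (i : Fin m) (j : Fin (n i)),
        Y k = ⟨i, j.succ⟩ → ∃ l, l < k ∧ Y l = ⟨i, j.castSucc⟩) →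
      (∀ (k : Fin (∑ i, (n i + 1))) (i : Fin m) (j : Fin (n i)),
        Z k = ⟨i, j.succ⟩ → ∃ l, l < k ∧ Z l = ⟨i, j.castSucc⟩) →
      snowCost R₀' A phead pstep Y = snowCost R₀' A phead pstep Z := by
  classical
  -- `A i j ⊆ R i j`
  have hAsub : ∀ i j, A i j ⊆ R i j := by
    intro i j
    induction j using Fin.lastCases with
    | last => rw [hAlast]
    | cast j => rw [hAstep]; exact Finset.filter_subset _ _
  -- existence of a full chain for every `a ∈ R₀'`
  have hchain : ∀ a ∈ R₀', ∃ g : ∀ i j, β i j,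
      (∀ i j, g i j ∈ A i j) ∧ (∀ i, phead i a (g i 0)) ∧
      (∀ i (j : Fin (n i)), pstep i j (g i (j.castSucc)) (g i j.succ)) := by
    intro a ha
    rw [hR₀', Finset.mem_filter] at ha
    choose b0 hb0 hph using ha.2
    have ex : ∀ i (j : Fin (n i)) (p : {b : β i j.castSucc // b ∈ A i j.castSucc}),
        ∃ b' ∈ A i j.succ, pstep i j p.1 b' := by
      intro i j p
      obtain ⟨b, hb⟩ := p
      rw [hAstep i j] at hb
      exact (Finset.mem_filter.mp hb).2
    choose step hstep1 hstep2 using ex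
    let g' : ∀ i, ∀ j : Fin (n i + 1), {b : β i j // b ∈ A i j} := fun i =>
      Fin.induction ⟨b0 i, hb0 i⟩ (fun j p => ⟨step i j p, hstep1 i j p⟩)
    refine ⟨fun i j => (g' i j).1, fun i j => (g' i j).2, fun i => hph i,
      fun i j => ?_⟩
    have : g' i j.succ = ⟨step i j (g' i j.castSucc), hstep1 i j (g' i j.castSucc)⟩ :=
      Fin.induction_succ _ _ j
    show pstep i j (↑(g' i j.castSucc)) (↑(g' i j.succ))
    rw [this]
    exact hstep2 i j (g' i j.castSucc)
  -- the cardinality of every downward-closed partial join equals `|R₀'|`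
  have hcard : ∀ s : Finset (Σ i : Fin m, Fin (n i + 1)),
      (∀ (i : Fin m) (j : Fin (n i)),
        (⟨i, j.succ⟩ : Σ i : Fin m, Fin (n i + 1)) ∈ s →
        (⟨i, j.castSucc⟩ : Σ i : Fin m, Fin (n i + 1)) ∈ s) →
      (snowPartialJoin R₀' A phead pstep s).card = R₀'.card := by
    intro s hs
    have hmem : ∀ x, x ∈ snowPartialJoin R₀' A phead pstep s ↔
        x.1 ∈ R₀' ∧ (∀ v (h : v ∈ s), x.2 v h ∈ A v.1 v.2) ∧
        (∀ (i : Fin m) (h : (⟨i, 0⟩ : Σ i : Fin m, Fin (n i + 1)) ∈ s),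
          phead i x.1 (x.2 ⟨i, 0⟩ h)) ∧
        (∀ (i : Fin m) (j : Fin (n i))
          (h : (⟨i, j.succ⟩ : Σ i : Fin m, Fin (n i + 1)) ∈ s)
          (h' : (⟨i, j.castSucc⟩ : Σ i : Fin m, Fin (n i + 1)) ∈ s),
          pstep i j (x.2 ⟨i, j.castSucc⟩ h') (x.2 ⟨i, j.succ⟩ h)) := by
      intro x
      unfold snowPartialJoin
      rw [Finset.mem_filter, Finset.mem_product, Finset.mem_pi]
      tauto
    apply Finset.card_bij (fun x _ => x.1)
    · intro x hx; exact ((hmem x).mp hx).1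
    · intro x hx y hy hxy
      obtain ⟨hx1, hx2, hx3, hx4⟩ := (hmem x).mp hx
      obtain ⟨hy1, hy2, hy3, hy4⟩ := (hmem y).mp hy
      refine Prod.ext hxy (funext fun v => funext fun h => ?_)
      obtain ⟨i, j⟩ := v
      induction j using Fin.induction with
      | zero =>
        exact hkeyhead i x.1 _ (hAsub i 0 (hx2 _ h)) _ (hAsub i 0 (hy2 _ h))
          (hx3 i h) (hxy ▸ hy3 i h)
      | succ j IH =>
        have h' := hs i j h
        have e := IH h'
        apply hkeystep i j (x.2 ⟨i, j.castSucc⟩ h') _ (hAsub _ _ (hx2 _ h)) _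
          (hAsub _ _ (hy2 _ h)) (hx4 i j h h')
        rw [e]
        exact hy4 i j h h'
    · intro a ha
      obtain ⟨g, hg1, hg2, hg3⟩ := hchain a ha
      exact ⟨(a, fun v _ => g v.1 v.2),
        (hmem _).mpr ⟨ha, fun v h => hg1 v.1 v.2, fun i h => hg2 i, fun i j h h' => hg3 i j⟩,
        rfl⟩
  intro Y Z hYb hZb hY hZ
  have hdc : ∀ (W : Fin (∑ i, (n i + 1)) → Σ i : Fin m, Fin (n i + 1)),
      (∀ (k : Fin (∑ i, (n i + 1))) (i : Fin m) (j : Fin (n i)),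
        W k = ⟨i, j.succ⟩ → ∃ l, l < k ∧ W l = ⟨i, j.castSucc⟩) →
      ∀ (k : ℕ) (i : Fin m) (j : Fin (n i)),
        (⟨i, j.succ⟩ : Σ i : Fin m, Fin (n i + 1)) ∈ snowPrefix W (k + 1) →
        (⟨i, j.castSucc⟩ : Σ i : Fin m, Fin (n i + 1)) ∈ snowPrefix W (k + 1) := by
    intro W hW k i j hmem
    simp only [snowPrefix, Finset.mem_image, Finset.mem_filter, Finset.mem_univ,
      true_and] at hmem ⊢
    obtain ⟨t, ht, hWt⟩ := hmem
    obtain ⟨l, hl, hWl⟩ := hW t i j hWt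
    exact ⟨l, lt_trans (Fin.lt_iff_val_lt_val.mp hl) ht, hWl⟩
  unfold snowCost
  congr 1
  rw [Finset.sum_congr rfl fun k _ => hcard _ (hdc Y hY k),
    Finset.sum_congr rfl fun k _ => hcard _ (hdc Z hZ k)]
end
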